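/- Inside the algebra of chiral differential operators D^ch_G at the critical level one has π_L(V^{κ_c}(g)) ∩ π_R(V^{κ_c}(g)) = π_L(z(ĝ)) = π_R(z(ĝ)) = (D^ch_G)^{g[t]×g[t]}; in particular both π_L and π_R restrict to vertex algebra isomorphisms z(ĝ) ≅ (D^ch_G)^{g[t]×g[t]}. -/
import Mathlib


noncomputable section

open scoped TensorProduct DirectSum

/-- A vertex algebra over `ℂ`: a complex vector space with a vacuum vector,
a translation operator `T` and modes `a_{(n)}`, subject to the standard axioms
(truncation, vacuum and creation axioms, translation axiom). -/
structure VertexAlgebra where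
  /-- the underlying complex vector space -/
  M : ModuleCat ℂ
  /-- the vacuum vector `|0⟩` -/
  vacuum : M
  /-- the `n`-th mode operation `a ↦ (b ↦ a_{(n)} b)` -/
  mode : M → ℤ → M →ₗ[ℂ] M
  mode_add : ∀ (a a' : M) (n : ℤ), mode (a + a') n = mode a n + mode a' n
  mode_smul : ∀ (c : ℂ) (a : M) (n : ℤ), mode (c • a) n = c • mode a n
  /-- the translation operator `T = ∂` -/
  T : M →ₗ[ℂ] M
  truncation : ∀ a b : M, ∃ N : ℤ, ∀ n : ℤ, N ≤ n → mode a n b = 0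
  vacuum_mode : ∀ (n : ℤ) (b : M), mode vacuum n b = if n = -1 then b else 0
  create : ∀ a : M, mode a (-1) vacuum = a
  create_nonneg : ∀ (a : M) (n : ℤ), 0 ≤ n → mode a n vacuum = 0
  T_vacuum : T vacuum = 0
  T_mode : ∀ (a : M) (n : ℤ), mode (T a) n = (-n : ℤ) • mode a (n - 1)

namespace VertexAlgebra

/-- A homomorphism of vertex algebras. -/
structure Hom (V W : VertexAlgebra) where
  toLinear : V.M →ₗ[ℂ] W.M
  map_vacuum : toLinear V.vacuum = W.vacuum
  map_T : ∀ a, toLinear (V.T a) = W.T (toLinear a)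
  map_mode : ∀ (a : V.M) (n : ℤ) (b : V.M),
    toLinear (V.mode a n b) = W.mode (toLinear a) n (toLinear b)

/-- Two vertex algebras are isomorphic if there is a bijective homomorphism. -/
def Iso (V W : VertexAlgebra) : Prop :=
  ∃ f : Hom V W, Function.Bijective f.toLinear

/-- An ideal of a vertex algebra. -/
def IsIdeal (V : VertexAlgebra) (I : Submodule ℂ V.M) : Prop :=
  ∀ (a : V.M) (n : ℤ), ∀ i ∈ I, V.mode a n i ∈ I ∧ V.mode i n a ∈ I

/-- A vertex algebra is simple if it is nonzero and has no nontrivial ideals. -/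
def IsSimple (V : VertexAlgebra) : Prop :=
  Nontrivial V.M ∧ ∀ I : Submodule ℂ V.M, V.IsIdeal I → I = ⊥ ∨ I = ⊤

/-- `ω` is a conformal vector of `V` with central charge `c`: the modes
`L_n = ω_{(n+1)}` satisfy the Virasoro commutation relations with central
charge `c`, `L_{-1} = T`, and `L_0` acts semisimply. -/
def IsConformalVector (V : VertexAlgebra) (ω : V.M) (c : ℂ) : Prop :=
  (∀ a : V.M, V.mode ω 0 a = V.T a) ∧
  ((⨆ μ : ℂ, Module.End.eigenspace (V.mode ω 1) μ) = ⊤) ∧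
  (∀ m n : ℤ,
    V.mode ω (m + 1) ∘ₗ V.mode ω (n + 1) - V.mode ω (n + 1) ∘ₗ V.mode ω (m + 1) =
      ((m - n : ℤ) : ℂ) • V.mode ω (m + n + 1) +
        (if m + n = 0 then (((m ^ 3 - m : ℤ) : ℂ) / 12 * c) • (LinearMap.id : V.M →ₗ[ℂ] V.M)
         else 0))

/-- A vertex algebra is conformal with central charge `c` if it admits a
conformal vector with that central charge. -/
def IsConformal (V : VertexAlgebra) (c : ℂ) : Prop :=
  ∃ ω : V.M, V.IsConformalVector ω c

/-- The commutant (coset) of a subset `S` of `V`: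
`Com(S,V) = { v ∈ V ∣ a_{(n)} v = 0 for all a ∈ S and all n ≥ 0 }`. -/
def commutant (V : VertexAlgebra) (S : Set V.M) : Submodule ℂ V.M where
  carrier := {v | ∀ a ∈ S, ∀ n : ℤ, 0 ≤ n → V.mode a n v = 0}
  add_mem' := by
    intro x y hx hy
    intro a ha n hn
    simp only [map_add, hx a ha n hn, hy a ha n hn, add_zero]
  zero_mem' := by
    intro a ha n hn
    simp
  smul_mem' := by
    intro c x hx a ha n hn
    simp only [map_smul, hx a ha n hn, smul_zero]

/-- A module (positive-energy representation) over a vertex algebra. -/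
structure Rep (V : VertexAlgebra) where
  M : ModuleCat ℂ
  action : V.M → ℤ → M →ₗ[ℂ] M
  action_vacuum : ∀ (n : ℤ) (m : M), action V.vacuum n m = if n = -1 then m else 0
  truncation : ∀ (a : V.M) (m : M), ∃ N : ℤ, ∀ n : ℤ, N ≤ n → action a n m = 0

/-- Isomorphism of modules over a vertex algebra. -/
def Rep.Iso {V : VertexAlgebra} (M N : V.Rep) : Prop :=
  ∃ f : M.M ≃ₗ[ℂ] N.M, ∀ (a : V.M) (n : ℤ) (x : M.M),
    f (M.action a n x) = N.action a n (f x)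

end VertexAlgebra

/-- Arakawa, Lemma `Lem:inversection-is-center`.
Let `G` be a connected, simply connected semisimple algebraic group over `ℂ`
with Lie algebra `g`, Killing form `κ_g` and critical level `κ_c = −κ_g/2`
(so `κ_c* = κ_c`).  The data:

* `Vaff = V^{κ_c}(g)`;
* `Dch = D^ch_G`, the cdo on `G` at the critical level, with its two
  commuting injective vertex algebra embeddings
  `piL, piR : V^{κ_c}(g) → D^ch_G`, each of whose images is the commutant of
  the other (hypotheses `hLR`, `hRL` below);
* the Feigin–Frenkel center `z(ĝ) = Z(V^{κ_c}(g))` is the center of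
  `V^{κ_c}(g)`, i.e. the commutant `Vaff.commutant Set.univ`, which also
  equals `V^{κ_c}(g)^{g[t]}`;
* since `V^{κ_c}(g)` is generated by `g`, the `g[t] × g[t]`-invariants
  `(D^ch_G)^{g[t]×g[t]}` coincide with
  `Com(π_L(V^{κ_c}(g)), D^ch_G) ⊓ Com(π_R(V^{κ_c}(g)), D^ch_G)`.

Then `π_L(V^{κ_c}(g)) ∩ π_R(V^{κ_c}(g)) = π_L(z(ĝ)) = π_R(z(ĝ))
  = (D^ch_G)^{g[t]×g[t]}`; in particular (with the injectivity of `π_L`,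
`π_R`) both `π_L` and `π_R` restrict to vertex algebra isomorphisms
`z(ĝ) ≅ (D^ch_G)^{g[t]×g[t]}`. -/
theorem center_of_cdo_at_critical_level
    (Vaff Dch : VertexAlgebra)
    (piL piR : VertexAlgebra.Hom Vaff Dch)
    (hinjL : Function.Injective piL.toLinear)
    (hinjR : Function.Injective piR.toLinear)
    (hLR : LinearMap.range piL.toLinear = Dch.commutant (Set.range piR.toLinear))
    (hRL : LinearMap.range piR.toLinear = Dch.commutant (Set.range piL.toLinear)) :
    LinearMap.range piL.toLinear ⊓ LinearMap.range piR.toLinear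
        = Submodule.map piL.toLinear (Vaff.commutant Set.univ) ∧
    Submodule.map piL.toLinear (Vaff.commutant Set.univ)
        = Submodule.map piR.toLinear (Vaff.commutant Set.univ) ∧
    Submodule.map piR.toLinear (Vaff.commutant Set.univ)
        = Dch.commutant (Set.range piL.toLinear)
            ⊓ Dch.commutant (Set.range piR.toLinear) := by
  have key : ∀ (pi : VertexAlgebra.Hom Vaff Dch), Function.Injective pi.toLinear →
      Submodule.map pi.toLinear (Vaff.commutant Set.univ)
        = LinearMap.range pi.toLinear ⊓ Dch.commutant (Set.range pi.toLinear) := by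
    intro pi hinj
    ext d
    simp only [Submodule.mem_map, Submodule.mem_inf, LinearMap.mem_range]
    constructor
    · rintro ⟨x, hx, rfl⟩
      refine ⟨⟨x, rfl⟩, ?_⟩
      rintro a ⟨b, rfl⟩ n hn
      rw [← pi.map_mode, hx b (Set.mem_univ b) n hn, map_zero]
    · rintro ⟨⟨x, rfl⟩, hcomm⟩
      refine ⟨x, ?_, rfl⟩
      intro b _ n hn
      apply hinj
      rw [pi.map_mode, map_zero]
      exact hcomm _ ⟨b, rfl⟩ n hn
  have hL := key piL hinjL
  have hR := key piR hinjR
  rw [hL, hR, ← hLR, ← hRL]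
  exact ⟨rfl, inf_comm _ _, rfl⟩
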